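/- Let (T,w) be a hierarchy on a finite set 𝒳 and let X, Y be n-element finite subsets of 𝒳. Then there exists a bijection B from X to Y such that for every vertex v ∈ V(T), the number of x ∈ X for which v is a common ancestor of x and B(x) equals min(|X_v|, |Y_v|), where S_v denotes the set of elements of S ⊆ 𝒳 that are descendants of v. -/

import Mathlib

open scoped Classical

structure Hierarchy (𝒳 : Type) where
  V : Type
  [fintypeV : Fintype V]
  leaf : 𝒳 → V
  leaf_inj : Function.Injective leaf
  root : V
  parent : V → V
  parent_root : parent root = root
  reaches_root : ∀ v : V, ∃ n : ℕ, parent^[n] v = root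
  leaf_iff : ∀ v : V, (∀ u : V, parent u = v → u = v) ↔ v ∈ Set.range leaf
  w : V → NNReal
  w_le : ∀ v : V, w (parent v) ≤ w v

attribute [instance] Hierarchy.fintypeV

namespace Hierarchy

variable {𝒳 : Type} (H : Hierarchy 𝒳)

/-- `u` is an ancestor of `v` (i.e. `u` lies on the iterated-parent path from `v` to the root). -/
def IsAncestor (v u : H.V) : Prop := ∃ n : ℕ, H.parent^[n] v = u

/-- The depth of a vertex: the number of edges on the path to the root. -/
noncomputable def depth (v : H.V) : ℕ := sInf {n : ℕ | H.parent^[n] v = H.root}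

/-- `u` is a lowest common ancestor of `x` and `y`: a common ancestor of maximal depth. -/
def IsLCA (x y u : H.V) : Prop :=
  H.IsAncestor x u ∧ H.IsAncestor y u ∧
    ∀ u' : H.V, H.IsAncestor x u' → H.IsAncestor y u' → H.depth u' ≤ H.depth u

/-- The additive weight function `ω`. -/
noncomputable def omega (v : H.V) : NNReal :=
  if v = H.root then H.w v else H.w v - H.w (H.parent v)

end Hierarchy

/-!
The clusters `{a | v is an ancestor of a}` of a hierarchy form a laminar family, and the
statement holds for any finite laminar family of sets. Match greedily a pair `(x₀, y₀) ∈ X × Y`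
lying in the largest number of common clusters. If a cluster contained `x₀` and some `y ∈ Y`
but not `y₀`, then every cluster containing `x₀` and `y₀` would, by laminarity, contain it and
hence `y`, so `(x₀, y)` would share strictly more clusters. Hence a cluster meeting `Y` that
contains `x₀` contains `y₀`, and symmetrically; this is exactly what keeps
`#{matched pairs inside C} = min #(X ∩ C) #(Y ∩ C)` true when `(x₀, y₀)` is added to an optimal
matching of the remaining points.
-/

open Finset

section Laminar

variable {α ι : Type*}

def IsLaminar (c : ι → Set α) : Prop :=
  ∀ i j, (c i ∩ c j).Nonempty → c i ⊆ c j ∨ c j ⊆ c i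

variable [Fintype ι] {c : ι → Set α}

noncomputable def commonClusters (c : ι → Set α) (x y : α) : Finset ι :=
  {i | x ∈ c i ∧ y ∈ c i}

lemma commonClusters_comm (c : ι → Set α) (x y : α) :
    commonClusters c x y = commonClusters c y x := by
  simp only [commonClusters, and_comm]

lemma IsLaminar.mem_of_card_commonClusters_le (hc : IsLaminar c) {x y y' : α} {i : ι}
    (hle : #(commonClusters c x y') ≤ #(commonClusters c x y)) (hx : x ∈ c i)
    (hy' : y' ∈ c i) : y ∈ c i := by
  by_contra hy
  have hsub : commonClusters c x y ⊂ commonClusters c x y' := by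
    refine ssubset_iff_of_subset (fun j hj => ?_) |>.mpr ⟨i, ?_, ?_⟩
    · simp only [commonClusters, mem_filter, mem_univ, true_and] at hj ⊢
      rcases hc i j ⟨x, hx, hj.1⟩ with hij | hji
      · exact ⟨hj.1, hij hy'⟩
      · exact absurd (hji hj.2) hy
    · simp [commonClusters, hx, hy']
    · simp [commonClusters, hy]
  exact (card_lt_card hsub).not_ge hle

lemma IsLaminar.exists_greedy_pair (hc : IsLaminar c) {X Y : Finset α} (hX : X.Nonempty)
    (hY : Y.Nonempty) :
    ∃ x₀ ∈ X, ∃ y₀ ∈ Y, ∀ i, (x₀ ∈ c i → ∀ y ∈ Y, y ∈ c i → y₀ ∈ c i) ∧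
      (y₀ ∈ c i → ∀ x ∈ X, x ∈ c i → x₀ ∈ c i) := by
  obtain ⟨⟨x₀, y₀⟩, hmem, hmax⟩ :=
    exists_max_image (X ×ˢ Y) (fun p => #(commonClusters c p.1 p.2)) (hX.product hY)
  obtain ⟨hx₀, hy₀⟩ := mem_product.mp hmem
  refine ⟨x₀, hx₀, y₀, hy₀, fun i => ⟨fun hx y hy hyi => ?_, fun hy x hx hxi => ?_⟩⟩
  · exact hc.mem_of_card_commonClusters_le (hmax (x₀, y) (mem_product.mpr ⟨hx₀, hy⟩)) hx hyi
  · have hle := hmax (x, y₀) (mem_product.mpr ⟨hx, hy₀⟩)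
    rw [commonClusters_comm c x, commonClusters_comm c x₀] at hle
    exact hc.mem_of_card_commonClusters_le hle hy hxi

lemma card_filter_insert_matched {C : Set α} {f : α → α} {X Y : Finset α} {x₀ y₀ : α}
    (hx₀ : x₀ ∉ X) (hy₀ : y₀ ∉ Y) (hfx₀ : f x₀ = y₀)
    (hXY : x₀ ∈ C → ∀ y ∈ Y, y ∈ C → y₀ ∈ C) (hYX : y₀ ∈ C → ∀ x ∈ X, x ∈ C → x₀ ∈ C)
    (hf : #{x ∈ X | x ∈ C ∧ f x ∈ C} = min #{x ∈ X | x ∈ C} #{y ∈ Y | y ∈ C}) :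
    #{x ∈ insert x₀ X | x ∈ C ∧ f x ∈ C} =
      min #{x ∈ insert x₀ X | x ∈ C} #{y ∈ insert y₀ Y | y ∈ C} := by
  simp only [filter_insert, hfx₀]
  by_cases hx : x₀ ∈ C <;> by_cases hy : y₀ ∈ C
  · simp only [hx, hy, and_self, if_true]
    rw [card_insert_of_notMem fun h => hx₀ (mem_of_mem_filter _ h),
      card_insert_of_notMem fun h => hx₀ (mem_of_mem_filter _ h),
      card_insert_of_notMem fun h => hy₀ (mem_of_mem_filter _ h), hf, min_add_add_right]
  · have hYC : #{y ∈ Y | y ∈ C} = 0 :=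
      card_filter_eq_zero_iff.mpr fun y hy' hyC => hy (hXY hx y hy' hyC)
    simp_all
  · have hXC : #{x ∈ X | x ∈ C} = 0 :=
      card_filter_eq_zero_iff.mpr fun x hx' hxC => hx (hYX hy x hx' hxC)
    simp_all
  · simp_all

theorem IsLaminar.exists_bijOn_card_filter_eq_min (hc : IsLaminar c) {X Y : Finset α}
    (hXY : #X = #Y) :
    ∃ f : α → α, Set.BijOn f X Y ∧
      ∀ i, #{x ∈ X | x ∈ c i ∧ f x ∈ c i} = min #{x ∈ X | x ∈ c i} #{y ∈ Y | y ∈ c i} := by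
  induction hn : #X generalizing X Y with
  | zero =>
    obtain rfl : X = ∅ := card_eq_zero.mp hn
    obtain rfl : Y = ∅ := card_eq_zero.mp (hXY ▸ hn)
    exact ⟨id, by simp, by simp⟩
  | succ n ih =>
    obtain ⟨x₀, hx₀, y₀, hy₀, hgreedy⟩ :=
      hc.exists_greedy_pair (X := X) (Y := Y) (card_pos.mp (by omega)) (card_pos.mp (by omega))
    obtain ⟨f, hbij, hcard⟩ := ih (X := X.erase x₀) (Y := Y.erase y₀)
      (by rw [card_erase_of_mem hx₀, card_erase_of_mem hy₀, hXY])
      (by simp [hx₀, hn])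
    have hagree : Set.EqOn (Function.update f x₀ y₀) f (X.erase x₀) := fun x hx =>
      Function.update_of_ne (mem_erase.mp hx).1 _ _
    refine ⟨Function.update f x₀ y₀, ?_, fun i => ?_⟩
    · rw [← insert_erase hx₀, ← insert_erase hy₀, coe_insert, coe_insert]
      simpa using ((hbij.congr hagree.symm).insert (a := x₀) (by simp))
    · rw [← insert_erase hx₀, ← insert_erase hy₀]
      refine card_filter_insert_matched (notMem_erase _ _) (notMem_erase _ _) (by simp)
        (fun hx y hy => (hgreedy i).1 hx y (mem_of_mem_erase hy))
        (fun hy x hx => (hgreedy i).2 hy x (mem_of_mem_erase hx)) ?_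
      rw [← hcard i]
      refine congrArg card (filter_congr fun x hx => ?_)
      rw [hagree hx]

lemma card_filter_univ_subtype (X : Finset α) (p : α → Prop) [DecidablePred p] :
    #{x : X | p x} = #{x ∈ X | p x} := by
  rw [univ_eq_attach, filter_attach, card_map, card_attach]

theorem IsLaminar.exists_equiv_card_filter_eq_min (hc : IsLaminar c) {X Y : Finset α}
    (hXY : #X = #Y) :
    ∃ B : X ≃ Y, ∀ i,
      #{x : X | ↑x ∈ c i ∧ ↑(B x) ∈ c i} = min #{x ∈ X | x ∈ c i} #{y ∈ Y | y ∈ c i} := by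
  obtain ⟨f, hbij, hcard⟩ := hc.exists_bijOn_card_filter_eq_min hXY
  refine ⟨hbij.equiv f, fun i => ?_⟩
  rw [← hcard i]
  exact card_filter_univ_subtype X fun x => x ∈ c i ∧ f x ∈ c i

end Laminar

namespace Hierarchy

variable {𝒳 : Type} {H : Hierarchy 𝒳}

lemma IsAncestor.trans {a b c : H.V} (hab : H.IsAncestor a b) (hbc : H.IsAncestor b c) :
    H.IsAncestor a c := by
  obtain ⟨m, rfl⟩ := hab
  obtain ⟨n, rfl⟩ := hbc
  exact ⟨n + m, Function.iterate_add_apply _ _ _ _⟩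

lemma IsAncestor.total {a u v : H.V} (hu : H.IsAncestor a u) (hv : H.IsAncestor a v) :
    H.IsAncestor u v ∨ H.IsAncestor v u := by
  obtain ⟨m, rfl⟩ := hu
  obtain ⟨n, rfl⟩ := hv
  rcases le_total m n with h | h
  · exact .inl ⟨n - m, by rw [← Function.iterate_add_apply, Nat.sub_add_cancel h]⟩
  · exact .inr ⟨m - n, by rw [← Function.iterate_add_apply, Nat.sub_add_cancel h]⟩

def cluster (H : Hierarchy 𝒳) (v : H.V) : Set 𝒳 := {a | H.IsAncestor (H.leaf a) v}

lemma isLaminar_cluster (H : Hierarchy 𝒳) : IsLaminar H.cluster := by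
  rintro u v ⟨a, hau, hav⟩
  rcases IsAncestor.total hau hav with huv | hvu
  · exact .inl fun b hb => IsAncestor.trans hb huv
  · exact .inr fun b hb => IsAncestor.trans hb hvu

end Hierarchy

theorem exists_optimal_assignment_general {𝒳 : Type}
    (H : Hierarchy 𝒳)
    (n : ℕ) (X Y : Finset 𝒳) (hX : X.card = n) (hY : Y.card = n) :
    ∃ B : {x // x ∈ X} ≃ {y // y ∈ Y}, ∀ v : H.V,
      (Finset.univ.filter fun x : {x // x ∈ X} =>
          H.IsAncestor (H.leaf (x : 𝒳)) v ∧
            H.IsAncestor (H.leaf ((B x : 𝒳))) v).card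
        = min ((X.filter fun a => H.IsAncestor (H.leaf a) v).card)
              ((Y.filter fun a => H.IsAncestor (H.leaf a) v).card) :=
  H.isLaminar_cluster.exists_equiv_card_filter_eq_min (hX.trans hY.symm)

/-- For a hierarchy on `𝒳` and `n`-element subsets `X, Y` there is a bijection
`B : X → Y` such that at every vertex `v` the number of pairs `(x, B x)` for which `v` is a
common ancestor equals `min |X_v| |Y_v|`. -/
theorem exists_optimal_assignment {𝒳 : Type} [Fintype 𝒳]
    (H : Hierarchy 𝒳)
    (n : ℕ) (X Y : Finset 𝒳) (hX : X.card = n) (hY : Y.card = n) :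
    ∃ B : {x // x ∈ X} ≃ {y // y ∈ Y}, ∀ v : H.V,
      (Finset.univ.filter fun x : {x // x ∈ X} =>
          H.IsAncestor (H.leaf (x : 𝒳)) v ∧
            H.IsAncestor (H.leaf ((B x : 𝒳))) v).card
        = min ((X.filter fun a => H.IsAncestor (H.leaf a) v).card)
              ((Y.filter fun a => H.IsAncestor (H.leaf a) v).card) :=
  exists_optimal_assignment_general H n X Y hX hY
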